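/- Let Q be a conjunctive query whose join graph is connected and whose head contains at least one variable that occurs in some atom of Q's body. If Q is full-lineage consistent with respect to a pair (I,O) — there is at least one assignment of Q on I producing O, and every tuple of I is used by some assignment of Q on I producing O — then the provenance graph of (I,O) is connected. -/

import Mathlib

/-- A database tuple: a relation name together with a finite sequence of constants. -/
structure Tup (R C : Type) where
  rel : R
  consts : List C

/-- A relational atom: a relation name together with a finite sequence of variables. -/
structure Atom (R V : Type) where
  rel : R
  vars : List V

/-- A conjunctive query: a head (finite sequence of variables) and a body,
a finite indexed family of relational atoms. -/
structure CQ (R V : Type) where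
  n : ℕ
  head : List V
  body : Fin n → Atom R V

variable {R V C : Type}

/-- An assignment of `Q` on a set of tuples `I`: it maps each atom of the body to a tuple
of `I` with the same relation name and the same arity, such that whenever two atom
positions hold the same variable, the assigned tuples hold the same constant there. -/
def IsAssignment (Q : CQ R V) (I : Set (Tup R C)) (a : Fin Q.n → Tup R C) : Prop :=
  (∀ k, a k ∈ I) ∧
  (∀ k, (a k).rel = (Q.body k).rel) ∧
  (∀ k, (a k).consts.length = (Q.body k).vars.length) ∧
  (∀ k k' i i' (v : V), (Q.body k).vars[(i : ℕ)]? = some v →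
    (Q.body k').vars[(i' : ℕ)]? = some v →
    (a k).consts[(i : ℕ)]? = (a k').consts[(i' : ℕ)]?)

/-- The assignment `a` produces the output tuple `O`: for every head variable at head
position `j`, wherever it occurs at position `i` of an atom, the constant at position `i`
of the assigned tuple equals the constant of `O` at position `j`. -/
def Produces (Q : CQ R V) (a : Fin Q.n → Tup R C) (O : List C) : Prop :=
  ∀ j i k (v : V), Q.head[(j : ℕ)]? = some v → (Q.body k).vars[(i : ℕ)]? = some v →
    (a k).consts[(i : ℕ)]? = O[(j : ℕ)]?

/-- `Q` is full-lineage consistent w.r.t. `(I, O)`: some assignment of `Q` on `I`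
produces `O`, and every tuple of `I` is used by some assignment of `Q` on `I`
producing `O`. -/
def FullLineageConsistent (Q : CQ R V) (I : Set (Tup R C)) (O : List C) : Prop :=
  (∃ a : Fin Q.n → Tup R C, IsAssignment Q I a ∧ Produces Q a O) ∧
  (∀ t ∈ I, ∃ a : Fin Q.n → Tup R C,
    IsAssignment Q I a ∧ Produces Q a O ∧ ∃ k, a k = t)

/-- Edge relation of the join graph of `Q`: two atoms are joined whenever they share a
variable (including a self-loop on an atom in which some variable occurs at two distinct
positions). -/
def JoinEdge (Q : CQ R V) (k k' : Fin Q.n) : Prop :=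
  ∃ (i : ℕ) (i' : ℕ) (v : V), (Q.body k).vars[(i : ℕ)]? = some v ∧ (Q.body k').vars[(i' : ℕ)]? = some v ∧
    (k ≠ k' ∨ i ≠ i')

/-- Edge relation of the provenance graph: two tuples are joined whenever they share a
constant (including a self-loop on a tuple in which some constant occurs at two distinct
positions). -/
def ProvEdge (t t' : Tup R C) : Prop :=
  ∃ (i : ℕ) (i' : ℕ) (c : C), t.consts[(i : ℕ)]? = some c ∧ t'.consts[(i' : ℕ)]? = some c ∧
    (t ≠ t' ∨ i ≠ i')

/-- A homomorphism from the join graph of `Q` to the provenance graph of `(I, O)`: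
(1) edges are mapped to edges, and in particular shared variables are mapped to shared
constants at the same positions; (2) relation names are preserved; (3) positions holding
head variables are mapped to the corresponding constants of `O`. -/
def IsHom (Q : CQ R V) (I : Set (Tup R C)) (O : List C)
    (h : Fin Q.n → Tup R C) : Prop :=
  (∀ k, h k ∈ I) ∧
  (∀ k k', JoinEdge Q k k' → ProvEdge (h k) (h k')) ∧
  (∀ k k' i i' (v : V), (Q.body k).vars[(i : ℕ)]? = some v →
    (Q.body k').vars[(i' : ℕ)]? = some v →
    (h k).consts[(i : ℕ)]? = (h k').consts[(i' : ℕ)]?) ∧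
  (∀ k, (h k).rel = (Q.body k).rel) ∧
  (∀ k i j (v : V), (Q.body k).vars[(i : ℕ)]? = some v → Q.head[(j : ℕ)]? = some v →
    (h k).consts[(i : ℕ)]? = O[(j : ℕ)]?)

/-- A set `H` of homomorphisms covers the provenance graph of `(I, O)`:
the union of the images `h[V_J]` over `h ∈ H` equals the node set `I`. -/
def Covers (Q : CQ R V) (I : Set (Tup R C)) (H : Set (Fin Q.n → Tup R C)) : Prop :=
  (⋃ h ∈ H, Set.range h) = I

/-- A conjunctive query is connected if its join graph is connected: every two nodes
(atoms of the body) are linked by a path of join-graph edges. -/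
def JoinConnected (Q : CQ R V) : Prop :=
  ∀ k k' : Fin Q.n, Relation.ReflTransGen (JoinEdge Q) k k'

/-- The provenance graph of `(I, O)` is connected: every two tuples of `I` are linked
by a path of provenance-graph edges going through tuples of `I`. -/
def ProvConnected (I : Set (Tup R C)) : Prop :=
  ∀ t ∈ I, ∀ t' ∈ I,
    Relation.ReflTransGen (fun a b => a ∈ I ∧ b ∈ I ∧ ProvEdge a b) t t'

/-!
Every assignment maps the connected join graph onto a connected part of the provenance graph,
since atoms sharing a variable are sent to tuples sharing a constant. Two assignments producing
`O` both send the atom holding a head variable to tuples carrying the same constant of `O` at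
that position, so their images touch. By full-lineage consistency every tuple of `I` lies in
such an image.
-/

open Relation

abbrev ProvAdj (I : Set (Tup R C)) (t t' : Tup R C) : Prop :=
  t ∈ I ∧ t' ∈ I ∧ ProvEdge t t'

lemma reflTransGen_provAdj_of_getElem?_eq {I : Set (Tup R C)} {t t' : Tup R C}
    (ht : t ∈ I) (ht' : t' ∈ I) {i i' : ℕ} {c : C}
    (hc : t.consts[i]? = some c) (hc' : t'.consts[i']? = some c) :
    ReflTransGen (ProvAdj I) t t' := by
  by_cases heq : t = t'
  · exact heq ▸ ReflTransGen.refl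
  · exact ReflTransGen.single ⟨ht, ht', i, i', c, hc, hc', Or.inl heq⟩

namespace IsAssignment

variable {Q : CQ R V} {I : Set (Tup R C)} {a : Fin Q.n → Tup R C}

lemma exists_consts_getElem?_eq_some (ha : IsAssignment Q I a) (k : Fin Q.n) {i : ℕ} {v : V}
    (hv : (Q.body k).vars[i]? = some v) : ∃ c, (a k).consts[i]? = some c := by
  have hlen : i < (a k).consts.length := ha.2.2.1 k ▸ (List.getElem?_eq_some_iff.mp hv).1
  exact ⟨_, List.getElem?_eq_getElem hlen⟩

lemma reflTransGen_provAdj_of_joinEdge (ha : IsAssignment Q I a) {k k' : Fin Q.n}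
    (e : JoinEdge Q k k') : ReflTransGen (ProvAdj I) (a k) (a k') := by
  obtain ⟨i, i', v, hv, hv', -⟩ := e
  obtain ⟨c, hc⟩ := ha.exists_consts_getElem?_eq_some k hv
  exact reflTransGen_provAdj_of_getElem?_eq (ha.1 k) (ha.1 k') hc
    (ha.2.2.2 k k' i i' v hv hv' ▸ hc)

lemma reflTransGen_provAdj (ha : IsAssignment Q I a) (hconn : JoinConnected Q)
    (k k' : Fin Q.n) : ReflTransGen (ProvAdj I) (a k) (a k') := by
  induction hconn k k' with
  | refl => exact ReflTransGen.refl
  | tail _ e ih => exact ih.trans (ha.reflTransGen_provAdj_of_joinEdge e)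

end IsAssignment

/-- If `Q` has a connected join graph, its head contains a variable
occurring in some body atom, and `Q` is full-lineage consistent w.r.t. `(I, O)`, then
the provenance graph of `(I, O)` is connected. -/
theorem prov_graph_connected_of_full_lineage_consistent
    (Q : CQ R V) (I : Set (Tup R C)) (O : List C)
    (hconn : JoinConnected Q)
    (hhead : ∃ (j : ℕ) (v : V) (k : Fin Q.n) (i : ℕ),
      Q.head[(j : ℕ)]? = some v ∧ (Q.body k).vars[(i : ℕ)]? = some v)
    (hcons : FullLineageConsistent Q I O) :
    ProvConnected I := by
  obtain ⟨j, v, k₀, i₀, hj, hi₀⟩ := hhead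
  intro t ht t' ht'
  obtain ⟨a, ha, hpa, k, rfl⟩ := hcons.2 t ht
  obtain ⟨b, hb, hpb, k', rfl⟩ := hcons.2 t' ht'
  obtain ⟨c, hc⟩ := ha.exists_consts_getElem?_eq_some k₀ hi₀
  have hc' : (b k₀).consts[i₀]? = some c := by
    rw [hpb j i₀ k₀ v hj hi₀, ← hpa j i₀ k₀ v hj hi₀, hc]
  have hab : ReflTransGen (ProvAdj I) (a k₀) (b k₀) :=
    reflTransGen_provAdj_of_getElem?_eq (ha.1 k₀) (hb.1 k₀) hc hc'
  exact ((ha.reflTransGen_provAdj hconn k k₀).trans hab).trans (hb.reflTransGen_provAdj hconn k₀ k')
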